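/- A graph G is 2-γ_SMB-critical if and only if G is isomorphic to G_n' ∪ K_1 for some n ≥ 1, or to G_n'' for some n ≥ 2. -/
import Mathlib


/-!
Maker–Breaker domination game.  The players Dominator and Staller alternately select
previously unselected vertices of a graph `G`.  Dominator wins if at some point his selected
vertices form a dominating set of `G`; Staller wins if she selects all vertices of the closed
neighbourhood of some vertex.  Below, `D` always denotes the set of vertices selected by
Dominator so far and `S` the set selected by Staller.
-/

namespace MBD

variable {V : Type*}

/-- `D` is a dominating set of `G`. -/
def IsDomSet (G : SimpleGraph V) (D : Set V) : Prop :=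
  ∀ v, v ∈ D ∨ ∃ u ∈ D, G.Adj u v

/-- Dominator is to move.  `DWin G k D S` says that Dominator has a strategy guaranteeing
that his selected set becomes a dominating set of `G` after at most `k` further moves of his
(the game ends when all vertices have been selected). -/
def DWin (G : SimpleGraph V) : ℕ → Set V → Set V → Prop
  | 0, D, _ => IsDomSet G D
  | (k+1), D, S => IsDomSet G D ∨
      ∃ v ∉ D ∪ S,
        (IsDomSet G (insert v D) ∨
          ((∃ w, w ∉ insert v D ∪ S) ∧
            ∀ w ∉ insert v D ∪ S, DWin G k (insert v D) (insert w S)))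

/-- Staller is to move, and Dominator can win using at most `k` further moves of his. -/
def DWinS (G : SimpleGraph V) (k : ℕ) (D S : Set V) : Prop :=
  IsDomSet G D ∨
    ((∃ w, w ∉ D ∪ S) ∧ ∀ w ∉ D ∪ S, DWin G k D (insert w S))

/-- The Maker–Breaker domination number `γ_MB` of `G`: the least `k` such that Dominator,
moving first (D-game), can win within at most `k` of his moves; `∞` if he cannot win. -/
noncomputable def gammaMB (G : SimpleGraph V) : ℕ∞ :=
  sInf (Nat.cast '' {k : ℕ | DWin G k ∅ ∅})

/-- The Maker–Breaker domination number `γ'_MB` of `G`: the least `k` such that Dominator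
can win within at most `k` of his moves in the S-game (Staller moves first); `∞` if he
cannot win. -/
noncomputable def gammaMB' (G : SimpleGraph V) : ℕ∞ :=
  sInf (Nat.cast '' {k : ℕ | DWinS G k ∅ ∅})

/-- Staller has won: she has selected all vertices of the closed neighbourhood `N[v]`
of some vertex `v`. -/
def IsStallerWin (G : SimpleGraph V) (S : Set V) : Prop :=
  ∃ v, v ∈ S ∧ ∀ u, G.Adj v u → u ∈ S

/-- Staller is to move.  `SWin G k D S` says Staller has a strategy to win using at most `k`
further moves of hers. -/
def SWin (G : SimpleGraph V) : ℕ → Set V → Set V → Prop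
  | 0, _, S => IsStallerWin G S
  | (k+1), D, S => IsStallerWin G S ∨
      ∃ v ∉ D ∪ S,
        (IsStallerWin G (insert v S) ∨
          ((∃ w, w ∉ D ∪ insert v S) ∧
            ∀ w ∉ D ∪ insert v S, SWin G k (insert w D) (insert v S)))

/-- Dominator is to move, and Staller can win within at most `k` further moves of hers. -/
def SWinD (G : SimpleGraph V) (k : ℕ) (D S : Set V) : Prop :=
  IsStallerWin G S ∨
    ((∃ w, w ∉ D ∪ S) ∧ ∀ w ∉ D ∪ S, SWin G k (insert w D) S)

/-- The Staller-Maker–Breaker domination number `γ_SMB` of `G`: the least `k` such that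
Staller can win within at most `k` of her moves in the D-game (Dominator starts);
`∞` if she cannot win. -/
noncomputable def gammaSMB (G : SimpleGraph V) : ℕ∞ :=
  sInf (Nat.cast '' {k : ℕ | SWinD G k ∅ ∅})

/-- The Staller-Maker–Breaker domination number `γ'_SMB` of `G`: the least `k` such that
Staller can win within at most `k` of her moves in the S-game (Staller starts);
`∞` if she cannot win. -/
noncomputable def gammaSMB' (G : SimpleGraph V) : ℕ∞ :=
  sInf (Nat.cast '' {k : ℕ | SWin G k ∅ ∅})

end MBD

open MBD

/-- The graph `G_n'`: the complete graph `K_n` (on `Fin n`, whose vertex `0` gets the pendants)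
with exactly two pendant vertices attached to the single vertex `0`. -/
def GnPrime (n : ℕ) : SimpleGraph (Fin n ⊕ Fin 2) :=
  SimpleGraph.fromRel (fun a b =>
    match a, b with
    | Sum.inl _, Sum.inl _ => True
    | Sum.inl i, Sum.inr _ => i.val = 0
    | _, _ => False)

/-- The disjoint union `G_n' ∪ K₁`. -/
def GnPrimeUnionK1 (n : ℕ) : SimpleGraph ((Fin n ⊕ Fin 2) ⊕ Unit) :=
  SimpleGraph.fromRel (fun a b =>
    match a, b with
    | Sum.inl (Sum.inl _), Sum.inl (Sum.inl _) => True
    | Sum.inl (Sum.inl i), Sum.inl (Sum.inr _) => i.val = 0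
    | _, _ => False)

/-- The graph `G_n''`: the complete graph `K_n` with exactly two pendant vertices attached to
the vertex `0` and exactly two pendant vertices attached to the vertex `1`. -/
def GnDoublePrime (n : ℕ) : SimpleGraph (Fin n ⊕ (Fin 2 ⊕ Fin 2)) :=
  SimpleGraph.fromRel (fun a b =>
    match a, b with
    | Sum.inl _, Sum.inl _ => True
    | Sum.inl i, Sum.inr (Sum.inl _) => i.val = 0
    | Sum.inl i, Sum.inr (Sum.inr _) => i.val = 1
    | _, _ => False)

namespace MBDAux

variable {V : Type*}

lemma enat_sInf_image (S : Set ℕ) (hS : S.Nonempty) :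
    sInf ((Nat.cast : ℕ → ℕ∞) '' S) = (Nat.cast (sInf S) : ℕ∞) := by
  apply le_antisymm
  · exact sInf_le ⟨sInf S, Nat.sInf_mem hS, rfl⟩
  · apply le_sInf
    rintro b ⟨k, hk, rfl⟩
    exact_mod_cast Nat.sInf_le hk

lemma enat_sInf_eq_two (S : Set ℕ) (hup : ∀ k, k ∈ S → k + 1 ∈ S) :
    sInf ((Nat.cast : ℕ → ℕ∞) '' S) = 2 ↔ (2 ∈ S ∧ 1 ∉ S) := by
  have hups : ∀ k m, k ≤ m → k ∈ S → m ∈ S := by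
    intro k m hkm hk
    induction m with
    | zero => simpa [Nat.le_zero.mp hkm] using hk
    | succ m ih =>
      rcases Nat.lt_or_ge k (m+1) with hlt | hge
      · exact hup _ (ih (Nat.lt_succ_iff.mp hlt))
      · simpa [Nat.le_antisymm hkm hge] using hk
  constructor
  · intro h
    rcases Set.eq_empty_or_nonempty S with rfl | hS
    · simp at h
    · rw [enat_sInf_image S hS] at h
      have h2 : sInf S = 2 := by exact_mod_cast h
      constructor
      · rw [← h2]; exact Nat.sInf_mem hS
      · intro h1
        have := Nat.sInf_le h1
        omega
  · rintro ⟨h2, h1⟩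
    have hS : S.Nonempty := ⟨2, h2⟩
    rw [enat_sInf_image S hS]
    have : sInf S = 2 := by
      have hle := Nat.sInf_le h2
      have hmem := Nat.sInf_mem hS
      interval_cases h : sInf S
      · exact absurd (hups 0 1 (by omega) hmem) h1
      · exact absurd hmem h1
      · rfl
    rw [this]
    rfl

lemma enat_two_lt_sInf (S : Set ℕ) (hup : ∀ k, k ∈ S → k + 1 ∈ S) :
    (2 : ℕ∞) < sInf ((Nat.cast : ℕ → ℕ∞) '' S) ↔ 2 ∉ S := by
  have hups : ∀ k m, k ≤ m → k ∈ S → m ∈ S := by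
    intro k m hkm hk
    induction m with
    | zero => simpa [Nat.le_zero.mp hkm] using hk
    | succ m ih =>
      rcases Nat.lt_or_ge k (m+1) with hlt | hge
      · exact hup _ (ih (Nat.lt_succ_iff.mp hlt))
      · simpa [Nat.le_antisymm hkm hge] using hk
  constructor
  · intro h h2
    have : sInf ((Nat.cast : ℕ → ℕ∞) '' S) ≤ 2 := sInf_le ⟨2, h2, rfl⟩
    exact absurd (lt_of_lt_of_le h this) (lt_irrefl _)
  · intro h2
    have h3 : (3 : ℕ∞) ≤ sInf ((Nat.cast : ℕ → ℕ∞) '' S) := by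
      apply le_sInf
      rintro b ⟨k, hk, rfl⟩
      have : 3 ≤ k := by
        by_contra hlt
        exact h2 (hups k 2 (by omega) hk)
      exact_mod_cast this
    calc (2:ℕ∞) < 3 := by norm_num
      _ ≤ _ := h3


def Isol (G : SimpleGraph V) (z : V) : Prop := ∀ u, ¬ G.Adj z u

def Pend (G : SimpleGraph V) (v x : V) : Prop := G.Adj v x ∧ ∀ u, G.Adj v u → u = x

def Conf (G : SimpleGraph V) (w : V) : Prop :=
  ∃ x v₁ v₂, x ≠ w ∧ v₁ ≠ w ∧ v₂ ≠ w ∧ v₁ ≠ v₂ ∧ Pend G v₁ x ∧ Pend G v₂ x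

def Cw (G : SimpleGraph V) (w : V) : Prop :=
  (∃ z, z ≠ w ∧ Isol G z) ∨ Conf G w

def Good (G : SimpleGraph V) : Prop :=
  Nonempty V ∧ (∀ w, Cw G w) ∧ (∀ z₁ z₂, Isol G z₁ → Isol G z₂ → z₁ = z₂) ∧
    (∀ u v, u ≠ v → ¬ G.Adj u v →
      ¬ ∀ w, Cw (G ⊔ SimpleGraph.fromEdgeSet {s(u, v)}) w)

def SA (G : SimpleGraph V) : Prop :=
  ∃ z x p₁ p₂ : V, Isol G z ∧ Pend G p₁ x ∧ Pend G p₂ x ∧ p₁ ≠ p₂ ∧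
    (∀ u v : V, u ≠ z → u ≠ p₁ → u ≠ p₂ → v ≠ z → v ≠ p₁ → v ≠ p₂ → u ≠ v → G.Adj u v)

def SB (G : SimpleGraph V) : Prop :=
  ∃ x₁ x₂ p₁ p₂ q₁ q₂ : V, x₁ ≠ x₂ ∧ p₁ ≠ p₂ ∧ q₁ ≠ q₂ ∧
    Pend G p₁ x₁ ∧ Pend G p₂ x₁ ∧ Pend G q₁ x₂ ∧ Pend G q₂ x₂ ∧
    (∀ u v : V, u ≠ p₁ → u ≠ p₂ → u ≠ q₁ → u ≠ q₂ →
      v ≠ p₁ → v ≠ p₂ → v ≠ q₁ → v ≠ q₂ → u ≠ v → G.Adj u v)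

lemma isStallerWin_singleton {G : SimpleGraph V} {a : V} :
    IsStallerWin G {a} ↔ Isol G a := by
  constructor
  · rintro ⟨v, hv, h⟩
    rcases hv with rfl
    intro u hadj
    have := h u hadj
    rcases this with rfl
    exact G.irrefl hadj
  · intro h
    exact ⟨a, rfl, fun u hu => absurd hu (h u)⟩

lemma isStallerWin_pair {G : SimpleGraph V} {a b : V} :
    IsStallerWin G (insert a {b}) ↔
      (Isol G a ∨ Pend G a b) ∨ (Isol G b ∨ Pend G b a) := by
  constructor
  · rintro ⟨v, hv, h⟩
    rcases hv with rfl | hv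
    · by_cases hab : G.Adj v b
      · left; right
        refine ⟨hab, fun u hu => ?_⟩
        rcases h u hu with rfl | rfl
        · exact absurd hu (G.irrefl)
        · rfl
      · left; left
        intro u hu
        rcases h u hu with rfl | rfl
        · exact G.irrefl hu
        · exact hab hu
    · simp only [Set.mem_singleton_iff] at hv
      subst hv
      by_cases hab : G.Adj v a
      · right; right
        refine ⟨hab, fun u hu => ?_⟩
        rcases h u hu with rfl | rfl
        · rfl
        · exact absurd hu (G.irrefl)
      · right; left
        intro u hu
        rcases h u hu with rfl | rfl
        · exact hab hu
        · exact G.irrefl hu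
  · rintro ((h | h) | (h | h))
    · exact ⟨a, Set.mem_insert _ _, fun u hu => absurd hu (h u)⟩
    · exact ⟨a, Set.mem_insert _ _, fun u hu => by rw [h.2 u hu]; right; rfl⟩
    · exact ⟨b, by right; rfl, fun u hu => absurd hu (h u)⟩
    · exact ⟨b, by right; rfl, fun u hu => by rw [h.2 u hu]; left; rfl⟩

lemma swin_zero (G : SimpleGraph V) (D S : Set V) : SWin G 0 D S ↔ IsStallerWin G S := Iff.rfl

lemma swin_succ (G : SimpleGraph V) (k : ℕ) (D S : Set V) :
    SWin G (k+1) D S ↔ IsStallerWin G S ∨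
      ∃ v ∉ D ∪ S,
        (IsStallerWin G (insert v S) ∨
          ((∃ w, w ∉ D ∪ insert v S) ∧
            ∀ w ∉ D ∪ insert v S, SWin G k (insert w D) (insert v S))) := Iff.rfl

lemma isStallerWin_mono {G : SimpleGraph V} {S S' : Set V} (h : S ⊆ S') :
    IsStallerWin G S → IsStallerWin G S' := by
  rintro ⟨v, hv, hall⟩
  exact ⟨v, h hv, fun u hu => h (hall u hu)⟩

lemma swin_mono {G : SimpleGraph V} : ∀ (k : ℕ) (D S : Set V),
    SWin G k D S → SWin G (k+1) D S := by
  intro k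
  induction k with
  | zero => intro D S h; exact Or.inl h
  | succ k ih =>
    intro D S h
    rcases h with h | ⟨v, hv, h⟩
    · exact Or.inl h
    · refine Or.inr ⟨v, hv, ?_⟩
      rcases h with h | ⟨hex, hall⟩
      · exact Or.inl h
      · exact Or.inr ⟨hex, fun w hw => ih _ _ (hall w hw)⟩

lemma swind_mono {G : SimpleGraph V} {k : ℕ} {D S : Set V} :
    SWinD G k D S → SWinD G (k+1) D S := by
  rintro (h | ⟨hex, hall⟩)
  · exact Or.inl h
  · exact Or.inr ⟨hex, fun w hw => swin_mono _ _ _ (hall w hw)⟩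

lemma swind_le {G : SimpleGraph V} {k m : ℕ} (hkm : k ≤ m) {D S : Set V}
    (h : SWinD G k D S) : SWinD G m D S := by
  induction m with
  | zero => simpa [Nat.le_zero.mp hkm] using h
  | succ m ih =>
    rcases Nat.lt_or_ge k (m+1) with hlt | hge
    · exact swind_mono (ih (Nat.lt_succ_iff.mp hlt))
    · simpa [Nat.le_antisymm hkm hge] using h

lemma not_isStallerWin_empty (G : SimpleGraph V) : ¬ IsStallerWin G (∅ : Set V) := by
  rintro ⟨v, hv, -⟩; exact hv

lemma swin_one_iff (G : SimpleGraph V) (D S : Set V) :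
    SWin G 1 D S ↔ IsStallerWin G S ∨ ∃ v, v ∉ D ∪ S ∧ IsStallerWin G (insert v S) := by
  show (IsStallerWin G S ∨ ∃ v ∉ D ∪ S, _) ↔ _
  constructor
  · rintro (h | ⟨v, hv, (h | ⟨⟨w, hw⟩, hall⟩)⟩)
    · exact Or.inl h
    · exact Or.inr ⟨v, hv, h⟩
    · exact Or.inr ⟨v, hv, hall w hw⟩
  · rintro (h | ⟨v, hv, h⟩)
    · exact Or.inl h
    · exact Or.inr ⟨v, hv, Or.inl h⟩

lemma swin_two_char (G : SimpleGraph V) (w : V) :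
    SWin G 2 {w} ∅ ↔ Cw G w := by
  constructor
  · intro h
    by_contra hcw
    rcases h with h | ⟨s₁, hs₁, h⟩
    · exact not_isStallerWin_empty G h
    · have hs₁w : s₁ ≠ w := by
        intro h'; apply hs₁; left; exact h'
      have hnotiso : ∀ z, z ≠ w → ¬ Isol G z := by
        intro z hz hiso
        exact hcw (Or.inl ⟨z, hz, hiso⟩)
      rcases h with h | ⟨⟨w₂, hw₂⟩, hall⟩
      · rw [show (insert s₁ (∅ : Set V)) = {s₁} by simp, isStallerWin_singleton] at h
        exact hnotiso s₁ hs₁w h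
      · -- threat analysis
        -- from any allowed Dominator reply y, Staller's success yields a "threat" s₂
        have key : ∀ y, y ∉ ({w} : Set V) ∪ insert s₁ ∅ →
            SWin G 1 (insert y {w}) (insert s₁ ∅) →
            ∃ s₂, s₂ ∉ insert y ({w} : Set V) ∪ insert s₁ ∅ ∧
              (Pend G s₂ s₁ ∨ Pend G s₁ s₂) := by
          intro y hy hsw
          rw [swin_one_iff] at hsw
          rcases hsw with h | ⟨s₂, hs₂, h⟩
          · rw [show (insert s₁ (∅ : Set V)) = {s₁} by simp, isStallerWin_singleton] at h
            exact absurd h (hnotiso s₁ hs₁w)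
          · refine ⟨s₂, hs₂, ?_⟩
            have hs₂s₁ : s₂ ≠ s₁ := by
              intro h'; apply hs₂; right; left; exact h'
            have hs₂w : s₂ ≠ w := by
              intro h'; apply hs₂; left; right; exact h'
            rw [show (insert s₂ (insert s₁ (∅:Set V))) = insert s₂ {s₁} by simp,
              isStallerWin_pair] at h
            rcases h with (h | h) | (h | h)
            · exact absurd h (hnotiso s₂ hs₂w)
            · exact Or.inl h
            · exact absurd h (hnotiso s₁ hs₁w)
            · exact Or.inr h
        by_cases hthr : ∃ y, y ∉ ({w} : Set V) ∪ insert s₁ ∅ ∧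
            (Pend G y s₁ ∨ Pend G s₁ y)
        · rcases hthr with ⟨y, hy, hyp⟩
          rcases key y hy (hall y hy) with ⟨s₂, hs₂, hsp⟩
          have hs₂y : s₂ ≠ y := by
            intro h'; apply hs₂; left; left; exact h'
          -- two distinct threats y and s₂ force a configuration or contradiction
          have hs₂mem : s₂ ∉ ({w} : Set V) ∪ insert s₁ ∅ := by
            intro h'; apply hs₂
            rcases h' with h' | h'
            · left; right; exact h'
            · right; exact h'
          have hyw : y ≠ w := by intro h'; apply hy; left; exact h'
          have hs₂w : s₂ ≠ w := by intro h'; apply hs₂mem; left; exact h'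
          apply hcw
          rcases hyp with hyp | hyp <;> rcases hsp with hsp | hsp
          · exact Or.inr ⟨s₁, y, s₂, hs₁w, hyw, hs₂w, fun h => hs₂y h.symm, hyp, hsp⟩
          · exact absurd (hsp.2 y (G.adj_symm hyp.1)) (Ne.symm hs₂y)
          · exact absurd (hyp.2 s₂ (G.adj_symm hsp.1)) hs₂y
          · exact absurd (hyp.2 s₂ hsp.1) hs₂y
        · rcases key w₂ hw₂ (hall w₂ hw₂) with ⟨s₂, hs₂, hsp⟩
          apply hthr
          refine ⟨s₂, ?_, hsp⟩
          intro h'; apply hs₂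
          rcases h' with h' | h'
          · left; right; exact h'
          · right; exact h'
  · intro h
    rcases h with ⟨z, hz, hiso⟩ | ⟨x, v₁, v₂, hx, hv₁, hv₂, hne, hp₁, hp₂⟩
    · refine Or.inr ⟨z, by simp [hz], Or.inl ?_⟩
      rw [show (insert z (∅ : Set V)) = {z} by simp, isStallerWin_singleton]
      exact hiso
    · have hv₁x : v₁ ≠ x := G.ne_of_adj hp₁.1
      have hv₂x : v₂ ≠ x := G.ne_of_adj hp₂.1
      refine Or.inr ⟨x, by simp [hx], Or.inr ⟨⟨v₁, by simp [hv₁, hv₁x]⟩, ?_⟩⟩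
      intro w₂ hw₂
      rw [swin_one_iff]
      by_cases h1 : w₂ = v₁
      · refine Or.inr ⟨v₂, ?_, ?_⟩
        · subst h1
          simp only [Set.mem_union, Set.mem_insert_iff, Set.mem_singleton_iff]
          push_neg
          refine ⟨⟨hne.symm, hv₂⟩, hv₂x, by simp⟩
        · rw [show (insert v₂ (insert x (∅:Set V))) = insert v₂ {x} by simp,
            isStallerWin_pair]
          exact Or.inl (Or.inr hp₂)
      · refine Or.inr ⟨v₁, ?_, ?_⟩
        · simp only [Set.mem_union, Set.mem_insert_iff, Set.mem_singleton_iff]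
          push_neg
          exact ⟨⟨fun h => h1 h.symm, hv₁⟩, hv₁x, by simp⟩
        · rw [show (insert v₁ (insert x (∅:Set V))) = insert v₁ {x} by simp,
            isStallerWin_pair]
          exact Or.inl (Or.inr hp₁)

lemma swind_two_iff (G : SimpleGraph V) :
    SWinD G 2 ∅ ∅ ↔ Nonempty V ∧ ∀ w, Cw G w := by
  show (IsStallerWin G ∅ ∨ _) ↔ _
  constructor
  · rintro (h | ⟨⟨w₀, -⟩, hall⟩)
    · exact absurd h (not_isStallerWin_empty G)
    · refine ⟨⟨w₀⟩, fun w => ?_⟩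
      have := hall w (by simp)
      rwa [show (insert w (∅ : Set V)) = {w} by simp, swin_two_char] at this
  · rintro ⟨⟨w₀⟩, hall⟩
    refine Or.inr ⟨⟨w₀, by simp⟩, fun w _ => ?_⟩
    rw [show (insert w (∅ : Set V)) = {w} by simp, swin_two_char]
    exact hall w

lemma swind_one_iff (G : SimpleGraph V) :
    SWinD G 1 ∅ ∅ ↔ ∃ z₁ z₂, z₁ ≠ z₂ ∧ Isol G z₁ ∧ Isol G z₂ := by
  show (IsStallerWin G ∅ ∨ _) ↔ _
  have hswin : ∀ w : V, SWin G 1 (insert w ∅) ∅ ↔ ∃ z, z ≠ w ∧ Isol G z := by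
    intro w
    rw [swin_one_iff]
    constructor
    · rintro (h | ⟨v, hv, h⟩)
      · exact absurd h (not_isStallerWin_empty G)
      · rw [show (insert v (∅ : Set V)) = {v} by simp, isStallerWin_singleton] at h
        refine ⟨v, fun h' => hv (by simp [h']), h⟩
    · rintro ⟨z, hz, h⟩
      refine Or.inr ⟨z, by simp [hz], ?_⟩
      rw [show (insert z (∅ : Set V)) = {z} by simp, isStallerWin_singleton]
      exact h
  constructor
  · rintro (h | ⟨⟨w₀, -⟩, hall⟩)
    · exact absurd h (not_isStallerWin_empty G)
    · rcases (hswin w₀).mp (hall w₀ (by simp)) with ⟨z₁, hz₁, hiso₁⟩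
      rcases (hswin z₁).mp (hall z₁ (by simp)) with ⟨z₂, hz₂, hiso₂⟩
      exact ⟨z₂, z₁, hz₂, hiso₂, hiso₁⟩
  · rintro ⟨z₁, z₂, hne, h₁, h₂⟩
    refine Or.inr ⟨⟨z₁, by simp⟩, fun w _ => ?_⟩
    rw [hswin w]
    by_cases h : z₁ = w
    · exact ⟨z₂, fun h' => hne (h.trans h'.symm), h₂⟩
    · exact ⟨z₁, h, h₁⟩

lemma gammaSMB_eq_two_iff (G : SimpleGraph V) :
    gammaSMB G = 2 ↔ ((Nonempty V ∧ ∀ w, Cw G w) ∧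
      ¬ ∃ z₁ z₂, z₁ ≠ z₂ ∧ Isol G z₁ ∧ Isol G z₂) := by
  rw [gammaSMB, enat_sInf_eq_two {k : ℕ | SWinD G k ∅ ∅} (fun k hk => swind_mono hk)]
  rw [Set.mem_setOf_eq, Set.mem_setOf_eq, swind_two_iff, swind_one_iff]

lemma gammaSMB_two_lt_iff (G : SimpleGraph V) :
    2 < gammaSMB G ↔ ¬ (Nonempty V ∧ ∀ w, Cw G w) := by
  rw [gammaSMB, enat_two_lt_sInf {k : ℕ | SWinD G k ∅ ∅} (fun k hk => swind_mono hk)]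
  rw [Set.mem_setOf_eq, swind_two_iff]

lemma addEdge_adj (G : SimpleGraph V) {u v : V} (huv : u ≠ v) (a b : V) :
    (G ⊔ SimpleGraph.fromEdgeSet {s(u, v)}).Adj a b ↔
      G.Adj a b ∨ ((a = u ∧ b = v) ∨ (a = v ∧ b = u)) := by
  simp only [SimpleGraph.sup_adj, SimpleGraph.fromEdgeSet_adj, Set.mem_singleton_iff,
    Sym2.eq_iff]
  constructor
  · rintro (h | ⟨(⟨rfl, rfl⟩ | ⟨rfl, rfl⟩), -⟩)
    · exact Or.inl h
    · exact Or.inr (Or.inl ⟨rfl, rfl⟩)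
    · exact Or.inr (Or.inr ⟨rfl, rfl⟩)
  · rintro (h | (⟨rfl, rfl⟩ | ⟨rfl, rfl⟩))
    · exact Or.inl h
    · exact Or.inr ⟨Or.inl ⟨rfl, rfl⟩, huv⟩
    · exact Or.inr ⟨Or.inr ⟨rfl, rfl⟩, huv.symm⟩

lemma isol_addEdge {G : SimpleGraph V} {u v z : V} (huv : u ≠ v) (hzu : z ≠ u) (hzv : z ≠ v)
    (h : Isol G z) : Isol (G ⊔ SimpleGraph.fromEdgeSet {s(u, v)}) z := by
  intro t ht
  rw [addEdge_adj G huv] at ht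
  rcases ht with ht | (⟨h1, -⟩ | ⟨h1, -⟩)
  · exact h t ht
  · exact hzu h1
  · exact hzv h1

lemma pend_addEdge {G : SimpleGraph V} {u v p x : V} (huv : u ≠ v) (hpu : p ≠ u)
    (hpv : p ≠ v) (h : Pend G p x) : Pend (G ⊔ SimpleGraph.fromEdgeSet {s(u, v)}) p x := by
  constructor
  · rw [addEdge_adj G huv]; exact Or.inl h.1
  · intro t ht
    rw [addEdge_adj G huv] at ht
    rcases ht with ht | (⟨h1, -⟩ | ⟨h1, -⟩)
    · exact h.2 t ht
    · exact absurd h1 hpu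
    · exact absurd h1 hpv

lemma isol_of_addEdge {G : SimpleGraph V} {u v z : V} (huv : u ≠ v)
    (h : Isol (G ⊔ SimpleGraph.fromEdgeSet {s(u, v)}) z) : Isol G z := by
  intro t ht
  exact h t (by rw [addEdge_adj G huv]; exact Or.inl ht)

lemma pend_of_addEdge {G : SimpleGraph V} {u v t s : V} (huv : u ≠ v) (hG : ¬ G.Adj u v)
    (h : Pend (G ⊔ SimpleGraph.fromEdgeSet {s(u, v)}) t s) :
    (t ≠ u ∧ t ≠ v ∧ Pend G t s) ∨ (t = u ∧ s = v ∧ Isol G u) ∨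
      (t = v ∧ s = u ∧ Isol G v) := by
  obtain ⟨hadj, huniq⟩ := h
  by_cases htu : t = u
  · subst htu
    have hsv : s = v := Eq.symm <| huniq v (by rw [addEdge_adj G huv]; exact Or.inr (Or.inl ⟨rfl, rfl⟩))
    refine Or.inr (Or.inl ⟨rfl, hsv, fun c hc => ?_⟩)
    have := huniq c (by rw [addEdge_adj G huv]; exact Or.inl hc)
    rw [this, hsv] at hc
    exact hG hc
  · by_cases htv : t = v
    · subst htv
      have hsu : s = u := Eq.symm <| huniq u
        (by rw [addEdge_adj G huv]; exact Or.inr (Or.inr ⟨rfl, rfl⟩))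
      refine Or.inr (Or.inr ⟨rfl, hsu, fun c hc => ?_⟩)
      have := huniq c (by rw [addEdge_adj G huv]; exact Or.inl hc)
      rw [this, hsu] at hc
      exact hG (G.adj_symm hc)
    · refine Or.inl ⟨htu, htv, ?_, fun c hc => ?_⟩
      · rw [addEdge_adj G huv] at hadj
        rcases hadj with h | (⟨h1, -⟩ | ⟨h1, -⟩)
        · exact h
        · exact absurd h1 htu
        · exact absurd h1 htv
      · exact huniq c (by rw [addEdge_adj G huv]; exact Or.inl hc)

lemma good_to_struct {G : SimpleGraph V} (h : Good G) : SA G ∨ SB G := by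
  obtain ⟨hne, hcw, huniq, hcrit⟩ := h
  by_cases hiso : ∃ z, Isol G z
  · obtain ⟨z, hz⟩ := hiso
    left
    rcases hcw z with ⟨z', hz', hiso'⟩ | ⟨x, p₁, p₂, hx, h1, h2, h12, hp₁, hp₂⟩
    · exact absurd (huniq z' z hiso' hz) hz'
    · refine ⟨z, x, p₁, p₂, hz, hp₁, hp₂, h12, ?_⟩
      intro u v huz hup₁ hup₂ hvz hvp₁ hvp₂ huv
      by_contra hnadj
      apply hcrit u v huv hnadj
      intro w
      by_cases hw : w = z
      · subst hw
        exact Or.inr ⟨x, p₁, p₂, hx, h1, h2, h12,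
          pend_addEdge huv (Ne.symm hup₁) (Ne.symm hvp₁) hp₁,
          pend_addEdge huv (Ne.symm hup₂) (Ne.symm hvp₂) hp₂⟩
      · exact Or.inl ⟨z, (fun h' => hw h'.symm), 
          isol_addEdge huv (Ne.symm huz) (Ne.symm hvz) hz⟩
  · right
    obtain ⟨w₀⟩ := hne
    rcases hcw w₀ with ⟨z, -, hzi⟩ | ⟨x₁, p₁, p₂, -, -, -, h12, hp₁, hp₂⟩
    · exact absurd ⟨z, hzi⟩ hiso
    rcases hcw x₁ with ⟨z, -, hzi⟩ | ⟨x₂, q₁, q₂, hx₂, hq₁x, hq₂x, h34, hq₁, hq₂⟩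
    · exact absurd ⟨z, hzi⟩ hiso
    -- distinctness facts
    have hpq : ∀ p q xa xb : V, Pend G p xa → Pend G q xb → xa ≠ xb → p ≠ q := by
      rintro p q xa xb hpa hqb hab rfl
      exact hab (hpa.2 xb hqb.1).symm
    have hx₂p₁ : x₂ ≠ p₁ := by
      rintro rfl
      exact hq₁x (hp₁.2 q₁ (G.adj_symm hq₁.1))
    have hx₂p₂ : x₂ ≠ p₂ := by
      rintro rfl
      exact hq₂x (hp₂.2 q₂ (G.adj_symm hq₂.1))
    have hpq₁₁ : p₁ ≠ q₁ := hpq p₁ q₁ x₁ x₂ hp₁ hq₁ (Ne.symm hx₂)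
    have hpq₁₂ : p₁ ≠ q₂ := hpq p₁ q₂ x₁ x₂ hp₁ hq₂ (Ne.symm hx₂)
    have hpq₂₁ : p₂ ≠ q₁ := hpq p₂ q₁ x₁ x₂ hp₂ hq₁ (Ne.symm hx₂)
    have hpq₂₂ : p₂ ≠ q₂ := hpq p₂ q₂ x₁ x₂ hp₂ hq₂ (Ne.symm hx₂)
    refine ⟨x₁, x₂, p₁, p₂, q₁, q₂, Ne.symm hx₂, h12, h34, hp₁, hp₂, hq₁, hq₂, ?_⟩
    intro u v hu₁ hu₂ hu₃ hu₄ hv₁ hv₂ hv₃ hv₄ huv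
    by_contra hnadj
    apply hcrit u v huv hnadj
    intro w
    by_cases hw : w = x₁ ∨ w = p₁ ∨ w = p₂
    · refine Or.inr ⟨x₂, q₁, q₂, ?_, ?_, ?_, h34,
        pend_addEdge huv (Ne.symm hu₃) (Ne.symm hv₃) hq₁,
        pend_addEdge huv (Ne.symm hu₄) (Ne.symm hv₄) hq₂⟩
      · rcases hw with rfl | rfl | rfl
        · exact hx₂
        · exact hx₂p₁
        · exact hx₂p₂
      · rcases hw with rfl | rfl | rfl
        · exact hq₁x
        · exact Ne.symm hpq₁₁
        · exact Ne.symm hpq₂₁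
      · rcases hw with rfl | rfl | rfl
        · exact hq₂x
        · exact Ne.symm hpq₁₂
        · exact Ne.symm hpq₂₂
    · push_neg at hw
      exact Or.inr ⟨x₁, p₁, p₂, Ne.symm hw.1, Ne.symm hw.2.1, Ne.symm hw.2.2, h12,
        pend_addEdge huv (Ne.symm hu₁) (Ne.symm hv₁) hp₁,
        pend_addEdge huv (Ne.symm hu₂) (Ne.symm hv₂) hp₂⟩

section SAcontext

variable {G : SimpleGraph V} {z x p₁ p₂ : V}
  (hz : Isol G z) (hp₁ : Pend G p₁ x) (hp₂ : Pend G p₂ x) (h12 : p₁ ≠ p₂)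
  (hcl : ∀ u v : V, u ≠ z → u ≠ p₁ → u ≠ p₂ → v ≠ z → v ≠ p₁ → v ≠ p₂ → u ≠ v → G.Adj u v)

include hz hp₁ hp₂ h12 hcl

omit h12 hcl in
lemma sa_basic_ne : z ≠ p₁ ∧ z ≠ p₂ ∧ z ≠ x ∧ x ≠ p₁ ∧ x ≠ p₂ := by
  refine ⟨?_, ?_, ?_, ?_, ?_⟩
  · rintro rfl; exact hz x hp₁.1
  · rintro rfl; exact hz x hp₂.1
  · rintro rfl; exact hz p₁ (G.adj_symm hp₁.1)
  · rintro rfl; exact G.irrefl hp₁.1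
  · rintro rfl; exact G.irrefl hp₂.1

omit h12 in
lemma sa_isol_unique : ∀ t, Isol G t → t = z := by
  intro t ht
  obtain ⟨hzp₁, hzp₂, hzx, hxp₁, hxp₂⟩ := sa_basic_ne hz hp₁ hp₂
  by_contra htz
  by_cases htp₁ : t = p₁
  · subst htp₁; exact ht x hp₁.1
  by_cases htp₂ : t = p₂
  · subst htp₂; exact ht x hp₂.1
  by_cases htx : t = x
  · subst htx; exact ht p₁ (G.adj_symm hp₁.1)
  · exact ht x (hcl t x htz htp₁ htp₂ (Ne.symm hzx) hxp₁ hxp₂ htx)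

lemma sa_pend_class : ∀ t s, Pend G t s → s = x ∧
    (t = p₁ ∨ t = p₂ ∨ (t ≠ z ∧ t ≠ p₁ ∧ t ≠ p₂ ∧ t ≠ x ∧
      ∀ c, c ≠ z → c ≠ p₁ → c ≠ p₂ → c = x ∨ c = t)) := by
  intro t s ht
  obtain ⟨hzp₁, hzp₂, hzx, hxp₁, hxp₂⟩ := sa_basic_ne hz hp₁ hp₂
  have htz : t ≠ z := by rintro rfl; exact hz s ht.1
  by_cases htp₁ : t = p₁
  · subst htp₁; exact ⟨hp₁.2 s ht.1, Or.inl rfl⟩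
  by_cases htp₂ : t = p₂
  · subst htp₂; exact ⟨hp₂.2 s ht.1, Or.inr (Or.inl rfl)⟩
  have htx : t ≠ x := by
    rintro rfl
    exact h12 ((ht.2 p₁ (G.adj_symm hp₁.1)).trans (ht.2 p₂ (G.adj_symm hp₂.1)).symm)
  have hsx : s = x :=
    (ht.2 x (hcl t x htz htp₁ htp₂ (Ne.symm hzx) hxp₁ hxp₂ htx)).symm ▸ rfl
  refine ⟨hsx, Or.inr (Or.inr ⟨htz, htp₁, htp₂, htx, fun c hcz hcp₁ hcp₂ => ?_⟩)⟩
  by_cases hct : c = t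
  · exact Or.inr hct
  · exact Or.inl ((ht.2 c (G.adj_symm (hcl c t hcz hcp₁ hcp₂ htz htp₁ htp₂ hct))).trans hsx)

omit hz hp₁ hp₂ h12 hcl in
lemma pend_mem_or {t a b : V} (h : ¬(t = a ∨ t = b)) : t ≠ a ∧ t ≠ b := by tauto

lemma sa_good : Good G := by
  obtain ⟨hzp₁, hzp₂, hzx, hxp₁, hxp₂⟩ := sa_basic_ne hz hp₁ hp₂
  refine ⟨⟨z⟩, ?_, ?_, ?_⟩
  · intro w
    by_cases hw : w = z
    · subst hw
      exact Or.inr ⟨x, p₁, p₂, Ne.symm hzx, Ne.symm hzp₁, Ne.symm hzp₂, h12, hp₁, hp₂⟩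
    · exact Or.inl ⟨z, fun h => hw h.symm, hz⟩
  · intro z₁ z₂ h₁ h₂
    rw [sa_isol_unique hz hp₁ hp₂ hcl z₁ h₁, sa_isol_unique hz hp₁ hp₂ hcl z₂ h₂]
  · intro u v huv hnadj hall
    by_cases hze : z = u ∨ z = v
    -- Dominator answers x
    · rcases hall x with ⟨t, htx, hisoE⟩ | ⟨x', v₁, v₂, hx'x, hv₁x, hv₂x, hne12, he₁, he₂⟩
      · have htz : t = z := sa_isol_unique hz hp₁ hp₂ hcl t (isol_of_addEdge huv hisoE)
        subst htz
        rcases hze with rfl | rfl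
        · exact hisoE v ((addEdge_adj G huv t v).mpr (Or.inr (Or.inl ⟨rfl, rfl⟩)))
        · exact hisoE u ((addEdge_adj G huv t u).mpr (Or.inr (Or.inr ⟨rfl, rfl⟩)))
      · rcases pend_of_addEdge huv hnadj he₁ with ⟨h1u, h1v, hq₁⟩ | ⟨rfl, rfl, hIu⟩ |
          ⟨rfl, rfl, hIv⟩
        · exact hx'x (sa_pend_class hz hp₁ hp₂ h12 hcl v₁ x' hq₁).1
        · rcases pend_of_addEdge huv hnadj he₂ with ⟨h2u, h2v, hq₂⟩ | ⟨rfl, h2, hIu'⟩ |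
            ⟨rfl, h2, hIv'⟩
          · exact hx'x (sa_pend_class hz hp₁ hp₂ h12 hcl v₂ _ hq₂).1
          · exact hne12 rfl
          · exact huv h2.symm
        · rcases pend_of_addEdge huv hnadj he₂ with ⟨h2u, h2v, hq₂⟩ | ⟨rfl, h2, hIu'⟩ |
            ⟨rfl, h2, hIv'⟩
          · exact hx'x (sa_pend_class hz hp₁ hp₂ h12 hcl v₂ _ hq₂).1
          · exact huv h2
          · exact hne12 rfl
    -- Dominator answers z
    · push_neg at hze
      obtain ⟨hzu, hzv⟩ := hze
      rcases hall z with ⟨t, htz, hisoE⟩ | ⟨x', v₁, v₂, hx'z, hv₁z, hv₂z, hne12, he₁, he₂⟩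
      · exact htz (sa_isol_unique hz hp₁ hp₂ hcl t (isol_of_addEdge huv hisoE))
      · have getpend : ∀ t, Pend (G ⊔ SimpleGraph.fromEdgeSet {s(u, v)}) t x' →
            t ≠ u ∧ t ≠ v ∧ Pend G t x' := by
          intro t ht
          rcases pend_of_addEdge huv hnadj ht with h | ⟨rfl, rfl, hIu⟩ | ⟨rfl, rfl, hIv⟩
          · exact h
          · exact absurd (sa_isol_unique hz hp₁ hp₂ hcl _ hIu) (Ne.symm hzu)
          · exact absurd (sa_isol_unique hz hp₁ hp₂ hcl _ hIv) (Ne.symm hzv)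
        obtain ⟨h1u, h1v, hq₁⟩ := getpend v₁ he₁
        obtain ⟨h2u, h2v, hq₂⟩ := getpend v₂ he₂
        -- one endpoint of the new edge is p₁ or p₂
        have ha : u = p₁ ∨ u = p₂ ∨ v = p₁ ∨ v = p₂ := by
          by_contra hcon
          push_neg at hcon
          exact hnadj (hcl u v (Ne.symm hzu) hcon.1 hcon.2.1 (Ne.symm hzv)
            hcon.2.2.1 hcon.2.2.2 huv)
        obtain ⟨-, hclass₁⟩ := sa_pend_class hz hp₁ hp₂ h12 hcl v₁ x' hq₁
        obtain ⟨-, hclass₂⟩ := sa_pend_class hz hp₁ hp₂ h12 hcl v₂ x' hq₂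
        -- the `K`-type property
        set KP : V → Prop := fun t => t ≠ z ∧ t ≠ p₁ ∧ t ≠ p₂ ∧ t ≠ x ∧
          ∀ c, c ≠ z → c ≠ p₁ → c ≠ p₂ → c = x ∨ c = t with hKP
        -- mixed case core : one pendant among {p₁,p₂}, the other of K-type
        have core_mixed : ∀ tP tK : V, tP ≠ tK → (tP = p₁ ∨ tP = p₂) → KP tK →
            tP ≠ u → tP ≠ v → tK ≠ u → tK ≠ v → False := by
          intro tP tK hPK hP hK hPu hPv hKu hKv
          have inner : ∀ a b : V, a ≠ b → ¬ G.Adj a b → b ≠ z →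
              tP ≠ a → tP ≠ b → tK ≠ a → tK ≠ b → (a = p₁ ∨ a = p₂) → False := by
            intro a b hab hnab hbz hPa hPb hKa hKb haP
            have hbp₁ : b ≠ p₁ := by
              rintro rfl
              rcases haP with rfl | rfl
              · exact hab rfl
              · rcases hP with h | h
                · exact hPb h
                · exact hPa h
            have hbp₂ : b ≠ p₂ := by
              rintro rfl
              rcases haP with rfl | rfl
              · rcases hP with h | h
                · exact hPa h
                · exact hPb h
              · exact hab rfl
            rcases hK.2.2.2.2 b hbz hbp₁ hbp₂ with rfl | rfl
            · rcases haP with rfl | rfl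
              · exact hnab hp₁.1
              · exact hnab hp₂.1
            · exact hKb rfl
          rcases ha with h | h | h | h
          · exact inner u v huv hnadj (Ne.symm hzv) hPu hPv hKu hKv (Or.inl h)
          · exact inner u v huv hnadj (Ne.symm hzv) hPu hPv hKu hKv (Or.inr h)
          · exact inner v u (Ne.symm huv) (fun h' => hnadj (G.adj_symm h')) (Ne.symm hzu)
              hPv hPu hKv hKu (Or.inl h)
          · exact inner v u (Ne.symm huv) (fun h' => hnadj (G.adj_symm h')) (Ne.symm hzu)
              hPv hPu hKv hKu (Or.inr h)
        rcases hclass₁ with rfl | rfl | hK₁ <;> rcases hclass₂ with h2 | h2 | hK₂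
        · exact hne12 h2.symm
        · subst h2
          rcases ha with h | h | h | h
          · exact h1u h.symm
          · exact h2u h.symm
          · exact h1v h.symm
          · exact h2v h.symm
        · exact core_mixed v₁ v₂ hne12 (Or.inl rfl) hK₂ h1u h1v h2u h2v
        · subst h2
          rcases ha with h | h | h | h
          · exact h2u h.symm
          · exact h1u h.symm
          · exact h2v h.symm
          · exact h1v h.symm
        · exact hne12 h2.symm
        · exact core_mixed v₁ v₂ hne12 (Or.inr rfl) hK₂ h1u h1v h2u h2v
        · exact core_mixed v₂ v₁ (Ne.symm hne12) (Or.inl h2) hK₁ h2u h2v h1u h1v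
        · exact core_mixed v₂ v₁ (Ne.symm hne12) (Or.inr h2) hK₁ h2u h2v h1u h1v
        · rcases hK₁.2.2.2.2 v₂ hK₂.1 hK₂.2.1 hK₂.2.2.1 with rfl | rfl
          · exact hK₂.2.2.2.1 rfl
          · exact hne12 rfl


end SAcontext

section SBcontext

variable {G : SimpleGraph V} {x₁ x₂ p₁ p₂ q₁ q₂ : V}
  (hx : x₁ ≠ x₂) (h12 : p₁ ≠ p₂) (h34 : q₁ ≠ q₂)
  (hp₁ : Pend G p₁ x₁) (hp₂ : Pend G p₂ x₁) (hq₁ : Pend G q₁ x₂) (hq₂ : Pend G q₂ x₂)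
  (hcl : ∀ u v : V, u ≠ p₁ → u ≠ p₂ → u ≠ q₁ → u ≠ q₂ →
      v ≠ p₁ → v ≠ p₂ → v ≠ q₁ → v ≠ q₂ → u ≠ v → G.Adj u v)

include hx h12 h34 hp₁ hp₂ hq₁ hq₂ hcl

lemma sb_ne : x₁ ≠ p₁ ∧ x₁ ≠ p₂ ∧ x₂ ≠ q₁ ∧ x₂ ≠ q₂ ∧ x₁ ≠ q₁ ∧ x₁ ≠ q₂ ∧
    x₂ ≠ p₁ ∧ x₂ ≠ p₂ ∧ p₁ ≠ q₁ ∧ p₁ ≠ q₂ ∧ p₂ ≠ q₁ ∧ p₂ ≠ q₂ := by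
  refine ⟨?_, ?_, ?_, ?_, ?_, ?_, ?_, ?_, ?_, ?_, ?_, ?_⟩
  · rintro rfl; exact G.irrefl hp₁.1
  · rintro rfl; exact G.irrefl hp₂.1
  · rintro rfl; exact G.irrefl hq₁.1
  · rintro rfl; exact G.irrefl hq₂.1
  · rintro rfl
    exact h12 ((hq₁.2 p₁ (G.adj_symm hp₁.1)).trans (hq₁.2 p₂ (G.adj_symm hp₂.1)).symm)
  · rintro rfl
    exact h12 ((hq₂.2 p₁ (G.adj_symm hp₁.1)).trans (hq₂.2 p₂ (G.adj_symm hp₂.1)).symm)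
  · rintro rfl
    exact h34 ((hp₁.2 q₁ (G.adj_symm hq₁.1)).trans (hp₁.2 q₂ (G.adj_symm hq₂.1)).symm)
  · rintro rfl
    exact h34 ((hp₂.2 q₁ (G.adj_symm hq₁.1)).trans (hp₂.2 q₂ (G.adj_symm hq₂.1)).symm)
  · rintro rfl; exact hx (hp₁.2 x₂ hq₁.1).symm
  · rintro rfl; exact hx (hp₁.2 x₂ hq₂.1).symm
  · rintro rfl; exact hx (hp₂.2 x₂ hq₁.1).symm
  · rintro rfl; exact hx (hp₂.2 x₂ hq₂.1).symm

lemma sb_no_isol : ∀ t, ¬ Isol G t := by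
  obtain ⟨e₁, e₂, e₃, e₄, e₅, e₆, e₇, e₈, -, -, -, -⟩ :=
    sb_ne hx h12 h34 hp₁ hp₂ hq₁ hq₂ hcl
  intro t ht
  by_cases h : t = p₁; · exact ht x₁ (h ▸ hp₁.1)
  by_cases h2 : t = p₂; · exact ht x₁ (h2 ▸ hp₂.1)
  by_cases h3 : t = q₁; · exact ht x₂ (h3 ▸ hq₁.1)
  by_cases h4 : t = q₂; · exact ht x₂ (h4 ▸ hq₂.1)
  by_cases h5 : t = x₁
  · exact ht x₂ (hcl t x₂ h h2 h3 h4 e₇ e₈ e₃ e₄ (h5 ▸ hx))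
  · exact ht x₁ (hcl t x₁ h h2 h3 h4 e₁ e₂ e₅ e₆ h5)

lemma sb_pend_class : ∀ t s, Pend G t s →
    ((t = p₁ ∨ t = p₂) ∧ s = x₁) ∨ ((t = q₁ ∨ t = q₂) ∧ s = x₂) := by
  obtain ⟨e₁, e₂, e₃, e₄, e₅, e₆, e₇, e₈, -, -, -, -⟩ :=
    sb_ne hx h12 h34 hp₁ hp₂ hq₁ hq₂ hcl
  intro t s ht
  by_cases h : t = p₁; · exact Or.inl ⟨Or.inl h, hp₁.2 s (h ▸ ht.1)⟩
  by_cases h2 : t = p₂; · exact Or.inl ⟨Or.inr h2, hp₂.2 s (h2 ▸ ht.1)⟩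
  by_cases h3 : t = q₁; · exact Or.inr ⟨Or.inl h3, hq₁.2 s (h3 ▸ ht.1)⟩
  by_cases h4 : t = q₂; · exact Or.inr ⟨Or.inr h4, hq₂.2 s (h4 ▸ ht.1)⟩
  exfalso
  by_cases h5 : t = x₁
  · subst h5
    exact e₇ ((ht.2 x₂ (hcl t x₂ h h2 h3 h4 e₇ e₈ e₃ e₄ hx)).trans
      (ht.2 p₁ (G.adj_symm hp₁.1)).symm)
  by_cases h6 : t = x₂
  · subst h6
    exact e₅ ((ht.2 x₁ (hcl t x₁ h h2 h3 h4 e₁ e₂ e₅ e₆ (Ne.symm hx))).trans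
      (ht.2 q₁ (G.adj_symm hq₁.1)).symm)
  · exact hx (((ht.2 x₁ (hcl t x₁ h h2 h3 h4 e₁ e₂ e₅ e₆ h5))).trans
      (ht.2 x₂ (hcl t x₂ h h2 h3 h4 e₇ e₈ e₃ e₄ h6)).symm)

lemma sb_good : Good G := by
  obtain ⟨e₁, e₂, e₃, e₄, e₅, e₆, e₇, e₈, f₁, f₂, f₃, f₄⟩ :=
    sb_ne hx h12 h34 hp₁ hp₂ hq₁ hq₂ hcl
  refine ⟨⟨x₁⟩, ?_, ?_, ?_⟩
  · intro w
    by_cases hw : w = x₁ ∨ w = p₁ ∨ w = p₂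
    · refine Or.inr ⟨x₂, q₁, q₂, ?_, ?_, ?_, h34, hq₁, hq₂⟩
      · rcases hw with rfl | rfl | rfl
        · exact Ne.symm hx
        · exact e₇
        · exact e₈
      · rcases hw with rfl | rfl | rfl
        · exact Ne.symm e₅
        · exact Ne.symm f₁
        · exact Ne.symm f₃
      · rcases hw with rfl | rfl | rfl
        · exact Ne.symm e₆
        · exact Ne.symm f₂
        · exact Ne.symm f₄
    · push_neg at hw
      exact Or.inr ⟨x₁, p₁, p₂, Ne.symm hw.1, Ne.symm hw.2.1, Ne.symm hw.2.2, h12, hp₁, hp₂⟩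
  · intro z₁ z₂ h₁ _
    exact absurd h₁ (sb_no_isol hx h12 h34 hp₁ hp₂ hq₁ hq₂ hcl z₁)
  · intro u v huv hnadj hall
    have noiso := sb_no_isol hx h12 h34 hp₁ hp₂ hq₁ hq₂ hcl
    have hePnonempty : u = p₁ ∨ u = p₂ ∨ u = q₁ ∨ u = q₂ ∨
        v = p₁ ∨ v = p₂ ∨ v = q₁ ∨ v = q₂ := by
      by_contra hcon
      push_neg at hcon
      obtain ⟨c₁, c₂, c₃, c₄, c₅, c₆, c₇, c₈⟩ := hcon
      exact hnadj (hcl u v c₁ c₂ c₃ c₄ c₅ c₆ c₇ c₈ huv)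
    have getpend : ∀ t s, Pend (G ⊔ SimpleGraph.fromEdgeSet {s(u, v)}) t s →
        t ≠ u ∧ t ≠ v ∧ Pend G t s := by
      intro t s ht
      rcases pend_of_addEdge huv hnadj ht with h | ⟨-, -, hIu⟩ | ⟨-, -, hIv⟩
      · exact h
      · exact absurd hIu (noiso _)
      · exact absurd hIv (noiso _)
    by_cases hqe : u = q₁ ∨ u = q₂ ∨ v = q₁ ∨ v = q₂
    · rcases hall x₁ with ⟨t, htw, hiso⟩ | ⟨x', v₁, v₂, hx', h1w, h2w, hne, he₁, he₂⟩
      · exact noiso t (isol_of_addEdge huv hiso)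
      · obtain ⟨h1u, h1v, hg₁⟩ := getpend v₁ x' he₁
        obtain ⟨h2u, h2v, hg₂⟩ := getpend v₂ x' he₂
        rcases sb_pend_class hx h12 h34 hp₁ hp₂ hq₁ hq₂ hcl v₁ x' hg₁ with ⟨-, rfl⟩ | ⟨hc₁, rfl⟩
        · exact hx' rfl
        rcases sb_pend_class hx h12 h34 hp₁ hp₂ hq₁ hq₂ hcl v₂ _ hg₂ with ⟨-, h'⟩ | ⟨hc₂, -⟩
        · exact hx (h'.symm) |>.elim
        -- {v₁, v₂} = {q₁, q₂} but the new edge hits {q₁, q₂}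
        have hqcover : ∀ j, (j = q₁ ∨ j = q₂) → j = v₁ ∨ j = v₂ := by
          intro j hj
          rcases hc₁ with h1 | h1 <;> rcases hc₂ with h2 | h2 <;> rcases hj with h3 | h3 <;>
            first
              | exact Or.inl (h3.trans h1.symm)
              | exact Or.inr (h3.trans h2.symm)
              | exact absurd (h1.trans h2.symm) hne
        rcases hqe with h | h | h | h
        · rcases hqcover u (Or.inl h) with rfl | rfl
          · exact h1u rfl
          · exact h2u rfl
        · rcases hqcover u (Or.inr h) with rfl | rfl
          · exact h1u rfl
          · exact h2u rfl
        · rcases hqcover v (Or.inl h) with rfl | rfl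
          · exact h1v rfl
          · exact h2v rfl
        · rcases hqcover v (Or.inr h) with rfl | rfl
          · exact h1v rfl
          · exact h2v rfl
    · push_neg at hqe
      obtain ⟨g₁, g₂, g₃, g₄⟩ := hqe
      have hpe : u = p₁ ∨ u = p₂ ∨ v = p₁ ∨ v = p₂ := by tauto
      rcases hall x₂ with ⟨t, htw, hiso⟩ | ⟨x', v₁, v₂, hx', h1w, h2w, hne, he₁, he₂⟩
      · exact noiso t (isol_of_addEdge huv hiso)
      · obtain ⟨h1u, h1v, hg₁⟩ := getpend v₁ x' he₁
        obtain ⟨h2u, h2v, hg₂⟩ := getpend v₂ x' he₂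
        rcases sb_pend_class hx h12 h34 hp₁ hp₂ hq₁ hq₂ hcl v₁ x' hg₁ with ⟨hc₁, rfl⟩ | ⟨-, rfl⟩
        swap
        · exact hx' rfl
        rcases sb_pend_class hx h12 h34 hp₁ hp₂ hq₁ hq₂ hcl v₂ _ hg₂ with ⟨hc₂, -⟩ | ⟨-, h'⟩
        swap
        · exact hx h' |>.elim
        have hpcover : ∀ j, (j = p₁ ∨ j = p₂) → j = v₁ ∨ j = v₂ := by
          intro j hj
          rcases hc₁ with h1 | h1 <;> rcases hc₂ with h2 | h2 <;> rcases hj with h3 | h3 <;>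
            first
              | exact Or.inl (h3.trans h1.symm)
              | exact Or.inr (h3.trans h2.symm)
              | exact absurd (h1.trans h2.symm) hne
        rcases hpe with h | h | h | h
        · rcases hpcover u (Or.inl h) with rfl | rfl
          · exact h1u rfl
          · exact h2u rfl
        · rcases hpcover u (Or.inr h) with rfl | rfl
          · exact h1u rfl
          · exact h2u rfl
        · rcases hpcover v (Or.inl h) with rfl | rfl
          · exact h1v rfl
          · exact h2v rfl
        · rcases hpcover v (Or.inr h) with rfl | rfl
          · exact h1v rfl
          · exact h2v rfl

end SBcontext

lemma gnp_adj_QQ (n : ℕ) (i i' : Fin n) :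
    (GnPrimeUnionK1 n).Adj (Sum.inl (Sum.inl i)) (Sum.inl (Sum.inl i')) ↔ i ≠ i' := by
  simp [GnPrimeUnionK1, SimpleGraph.fromRel_adj]

lemma gnp_adj_QP (n : ℕ) (i : Fin n) (j : Fin 2) :
    (GnPrimeUnionK1 n).Adj (Sum.inl (Sum.inl i)) (Sum.inl (Sum.inr j)) ↔ i.val = 0 := by
  simp [GnPrimeUnionK1, SimpleGraph.fromRel_adj]

lemma gnp_adj_PQ (n : ℕ) (i : Fin n) (j : Fin 2) :
    (GnPrimeUnionK1 n).Adj (Sum.inl (Sum.inr j)) (Sum.inl (Sum.inl i)) ↔ i.val = 0 := by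
  simp [GnPrimeUnionK1, SimpleGraph.fromRel_adj]

lemma gnp_adj_PP (n : ℕ) (j j' : Fin 2) :
    ¬ (GnPrimeUnionK1 n).Adj (Sum.inl (Sum.inr j)) (Sum.inl (Sum.inr j')) := by
  simp [GnPrimeUnionK1, SimpleGraph.fromRel_adj]

lemma gnp_adj_z (n : ℕ) (a : (Fin n ⊕ Fin 2) ⊕ Unit) (u : Unit) :
    ¬ (GnPrimeUnionK1 n).Adj a (Sum.inr u) ∧ ¬ (GnPrimeUnionK1 n).Adj (Sum.inr u) a := by
  constructor <;>
  · intro h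
    rw [GnPrimeUnionK1, SimpleGraph.fromRel_adj] at h
    rcases a with (a | a) | a <;>
      rcases h with ⟨-, h | h⟩ <;> (try rcases a with a | a) <;> simp at h

lemma sa_iso {V : Type*} [Fintype V] {G : SimpleGraph V} {z x p₁ p₂ : V}
    (hz : Isol G z) (hp₁ : Pend G p₁ x) (hp₂ : Pend G p₂ x) (h12 : p₁ ≠ p₂)
    (hcl : ∀ u v : V, u ≠ z → u ≠ p₁ → u ≠ p₂ → v ≠ z → v ≠ p₁ → v ≠ p₂ → u ≠ v → G.Adj u v) :
    ∃ n : ℕ, 1 ≤ n ∧ Nonempty (G ≃g GnPrimeUnionK1 n) := by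
  classical
  have hzp₁ : z ≠ p₁ := by rintro rfl; exact hz x hp₁.1
  have hzp₂ : z ≠ p₂ := by rintro rfl; exact hz x hp₂.1
  have hzx : z ≠ x := by rintro rfl; exact hz p₁ (G.adj_symm hp₁.1)
  have hxp₁ : x ≠ p₁ := by rintro rfl; exact G.irrefl hp₁.1
  have hxp₂ : x ≠ p₂ := by rintro rfl; exact G.irrefl hp₂.1
  set Q := {v : V // ¬ v = z ∧ ¬ v = p₁ ∧ ¬ v = p₂} with hQ
  set n := Fintype.card Q with hn
  set xQ : Q := ⟨x, hzx.symm, hxp₁, hxp₂⟩ with hxQdef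
  have hpos : 0 < n := Fintype.card_pos_iff.mpr ⟨xQ⟩
  set z0 : Fin n := ⟨0, hpos⟩ with hz0
  set e : Q ≃ Fin n := (Fintype.equivFin Q).trans (Equiv.swap ((Fintype.equivFin Q) xQ) z0)
    with he
  have hexQ : e xQ = z0 := by
    simp [he, Equiv.swap_apply_left]
  have einj : ∀ (b : V) (hb : ¬ b = z ∧ ¬ b = p₁ ∧ ¬ b = p₂),
      (e ⟨b, hb⟩).val = 0 ↔ b = x := by
    intro b hb
    constructor
    · intro h
      have h0 : e ⟨b, hb⟩ = z0 := Fin.ext h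
      have h2 := e.injective (h0.trans hexQ.symm)
      have h3 := congrArg Subtype.val h2
      rw [hxQdef] at h3
      exact h3
    · intro h
      have h4 : (⟨b, hb⟩ : Q) = xQ := by
        rw [hxQdef]
        exact Subtype.ext h
      rw [h4, hexQ]
  have hGp₁ : ∀ b, G.Adj p₁ b ↔ b = x :=
    fun b => ⟨fun h => hp₁.2 b h, fun h => h ▸ hp₁.1⟩
  have hGp₂ : ∀ b, G.Adj p₂ b ↔ b = x :=
    fun b => ⟨fun h => hp₂.2 b h, fun h => h ▸ hp₂.1⟩
  set F : V → (Fin n ⊕ Fin 2) ⊕ Unit := fun v =>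
    if h1 : v = z then Sum.inr () else if h2 : v = p₁ then Sum.inl (Sum.inr 0)
      else if h3 : v = p₂ then Sum.inl (Sum.inr 1)
      else Sum.inl (Sum.inl (e ⟨v, h1, h2, h3⟩)) with hF
  have hFz : F z = Sum.inr () := by rw [hF]; simp
  have hFp₁ : F p₁ = Sum.inl (Sum.inr 0) := by rw [hF]; simp [hzp₁.symm]
  have hFp₂ : F p₂ = Sum.inl (Sum.inr 1) := by
    rw [hF]; simp [hzp₂.symm, h12.symm]
  have hFq : ∀ (v : V) (h1 : ¬ v = z) (h2 : ¬ v = p₁) (h3 : ¬ v = p₂),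
      F v = Sum.inl (Sum.inl (e ⟨v, h1, h2, h3⟩)) := by
    intro v h1 h2 h3
    rw [hF]; simp only [dif_neg h1, dif_neg h2, dif_neg h3]
  refine ⟨n, hpos, ⟨?_⟩⟩
  refine ⟨⟨F, fun a => match a with
      | Sum.inr _ => z
      | Sum.inl (Sum.inr i) => if i = 0 then p₁ else p₂
      | Sum.inl (Sum.inl j) => (e.symm j : V), ?_, ?_⟩, ?_⟩
  · intro v
    by_cases h1 : v = z
    · rw [h1, hFz]
    by_cases h2 : v = p₁
    · rw [h2, hFp₁]; simp
    by_cases h3 : v = p₂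
    · rw [h3, hFp₂]; norm_num
    · rw [hFq v h1 h2 h3]
      simp
  · intro a
    match a with
    | Sum.inr u =>
      show F z = _
      rw [hFz]
    | Sum.inl (Sum.inr i) =>
      show F (if i = 0 then p₁ else p₂) = Sum.inl (Sum.inr i)
      by_cases hi : i = 0
      · rw [if_pos hi, hFp₁, hi]
      · rw [if_neg hi, hFp₂]
        have h1 : i = 1 := by
          have hlt := i.isLt
          have hv : i.val ≠ 0 := fun h => hi (Fin.ext h)
          apply Fin.ext
          simp only [Fin.val_one]
          omega
        rw [h1]
    | Sum.inl (Sum.inl j) =>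
      show F (e.symm j : V) = _
      have hmem := (e.symm j).2
      rw [hFq _ hmem.1 hmem.2.1 hmem.2.2]
      simp
  · intro a b
    simp only [Equiv.coe_fn_mk]
    by_cases ha1 : a = z
    · rw [ha1, hFz]
      exact iff_of_false (gnp_adj_z n _ ()).2 (hz b)
    by_cases hb1 : b = z
    · rw [hb1, hFz]
      exact iff_of_false (gnp_adj_z n _ ()).1 (fun h => hz a (G.adj_symm h))
    by_cases ha2 : a = p₁
    · rw [ha2, hFp₁]
      by_cases hb2 : b = p₁
      · rw [hb2, hFp₁]
        exact iff_of_false (gnp_adj_PP n 0 0) G.irrefl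
      by_cases hb3 : b = p₂
      · rw [hb3, hFp₂]
        exact iff_of_false (gnp_adj_PP n 0 1)
          (fun h => (Ne.symm hxp₂) ((hGp₁ p₂).mp h))
      · rw [hFq b hb1 hb2 hb3, gnp_adj_PQ, hGp₁, einj]
    by_cases ha3 : a = p₂
    · rw [ha3, hFp₂]
      by_cases hb2 : b = p₁
      · rw [hb2, hFp₁]
        exact iff_of_false (gnp_adj_PP n 1 0)
          (fun h => (Ne.symm hxp₁) ((hGp₂ p₁).mp h))
      by_cases hb3 : b = p₂
      · rw [hb3, hFp₂]
        exact iff_of_false (gnp_adj_PP n 1 1) G.irrefl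
      · rw [hFq b hb1 hb2 hb3, gnp_adj_PQ, hGp₂, einj]
    · rw [hFq a ha1 ha2 ha3]
      by_cases hb2 : b = p₁
      · rw [hb2, hFp₁, gnp_adj_QP, einj]
        rw [G.adj_comm, hGp₁]
      by_cases hb3 : b = p₂
      · rw [hb3, hFp₂, gnp_adj_QP, einj]
        rw [G.adj_comm, hGp₂]
      · rw [hFq b hb1 hb2 hb3, gnp_adj_QQ]
        constructor
        · intro h
          refine hcl a b ha1 ha2 ha3 hb1 hb2 hb3 ?_
          rintro rfl
          exact h rfl
        · intro h hcon
          have : a = b := congrArg Subtype.val (e.injective hcon)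
          exact G.ne_of_adj h this

lemma gdp_adj_QQ (n : ℕ) (i i' : Fin n) :
    (GnDoublePrime n).Adj (Sum.inl i) (Sum.inl i') ↔ i ≠ i' := by
  simp [GnDoublePrime, SimpleGraph.fromRel_adj]

lemma gdp_adj_QP (n : ℕ) (i : Fin n) (j : Fin 2) :
    (GnDoublePrime n).Adj (Sum.inl i) (Sum.inr (Sum.inl j)) ↔ i.val = 0 := by
  simp [GnDoublePrime, SimpleGraph.fromRel_adj]

lemma gdp_adj_PQ (n : ℕ) (i : Fin n) (j : Fin 2) :
    (GnDoublePrime n).Adj (Sum.inr (Sum.inl j)) (Sum.inl i) ↔ i.val = 0 := by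
  simp [GnDoublePrime, SimpleGraph.fromRel_adj]

lemma gdp_adj_QR (n : ℕ) (i : Fin n) (j : Fin 2) :
    (GnDoublePrime n).Adj (Sum.inl i) (Sum.inr (Sum.inr j)) ↔ i.val = 1 := by
  simp [GnDoublePrime, SimpleGraph.fromRel_adj]

lemma gdp_adj_RQ (n : ℕ) (i : Fin n) (j : Fin 2) :
    (GnDoublePrime n).Adj (Sum.inr (Sum.inr j)) (Sum.inl i) ↔ i.val = 1 := by
  simp [GnDoublePrime, SimpleGraph.fromRel_adj]

lemma gdp_adj_PP (n : ℕ) (a b : Fin 2 ⊕ Fin 2) :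
    ¬ (GnDoublePrime n).Adj (Sum.inr a) (Sum.inr b) := by
  intro h
  rw [GnDoublePrime, SimpleGraph.fromRel_adj] at h
  rcases a with a | a <;> rcases b with b | b <;> rcases h with ⟨-, h | h⟩ <;> simp at h

lemma sb_iso {V : Type*} [Fintype V] {G : SimpleGraph V} {x₁ x₂ p₁ p₂ q₁ q₂ : V}
    (hx : x₁ ≠ x₂) (h12 : p₁ ≠ p₂) (h34 : q₁ ≠ q₂)
    (hp₁ : Pend G p₁ x₁) (hp₂ : Pend G p₂ x₁) (hq₁ : Pend G q₁ x₂) (hq₂ : Pend G q₂ x₂)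
    (hcl : ∀ u v : V, u ≠ p₁ → u ≠ p₂ → u ≠ q₁ → u ≠ q₂ →
      v ≠ p₁ → v ≠ p₂ → v ≠ q₁ → v ≠ q₂ → u ≠ v → G.Adj u v) :
    ∃ n : ℕ, 2 ≤ n ∧ Nonempty (G ≃g GnDoublePrime n) := by
  classical
  have e₁ : x₁ ≠ p₁ := by rintro rfl; exact G.irrefl hp₁.1
  have e₂ : x₁ ≠ p₂ := by rintro rfl; exact G.irrefl hp₂.1
  have e₃ : x₂ ≠ q₁ := by rintro rfl; exact G.irrefl hq₁.1
  have e₄ : x₂ ≠ q₂ := by rintro rfl; exact G.irrefl hq₂.1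
  have e₅ : x₁ ≠ q₁ := by
    rintro rfl
    exact h12 ((hq₁.2 p₁ (G.adj_symm hp₁.1)).trans (hq₁.2 p₂ (G.adj_symm hp₂.1)).symm)
  have e₆ : x₁ ≠ q₂ := by
    rintro rfl
    exact h12 ((hq₂.2 p₁ (G.adj_symm hp₁.1)).trans (hq₂.2 p₂ (G.adj_symm hp₂.1)).symm)
  have e₇ : x₂ ≠ p₁ := by
    rintro rfl
    exact h34 ((hp₁.2 q₁ (G.adj_symm hq₁.1)).trans (hp₁.2 q₂ (G.adj_symm hq₂.1)).symm)
  have e₈ : x₂ ≠ p₂ := by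
    rintro rfl
    exact h34 ((hp₂.2 q₁ (G.adj_symm hq₁.1)).trans (hp₂.2 q₂ (G.adj_symm hq₂.1)).symm)
  have f₁ : p₁ ≠ q₁ := by rintro rfl; exact hx (hp₁.2 x₂ hq₁.1).symm
  have f₂ : p₁ ≠ q₂ := by rintro rfl; exact hx (hp₁.2 x₂ hq₂.1).symm
  have f₃ : p₂ ≠ q₁ := by rintro rfl; exact hx (hp₂.2 x₂ hq₁.1).symm
  have f₄ : p₂ ≠ q₂ := by rintro rfl; exact hx (hp₂.2 x₂ hq₂.1).symm
  set Q := {v : V // ¬ v = p₁ ∧ ¬ v = p₂ ∧ ¬ v = q₁ ∧ ¬ v = q₂} with hQ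
  set n := Fintype.card Q with hn
  set x₁Q : Q := ⟨x₁, e₁, e₂, e₅, e₆⟩ with hx₁Q
  set x₂Q : Q := ⟨x₂, e₇, e₈, e₃, e₄⟩ with hx₂Q
  have hQne : x₁Q ≠ x₂Q := by
    rw [hx₁Q, hx₂Q]
    intro h
    exact hx (congrArg Subtype.val h)
  have hpos2 : 2 ≤ n := Fintype.one_lt_card_iff_nontrivial.mpr ⟨x₁Q, x₂Q, hQne⟩
  have hpos : 0 < n := by omega
  set z0 : Fin n := ⟨0, by omega⟩ with hz0
  set z1 : Fin n := ⟨1, by omega⟩ with hz1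
  have hz01 : z0 ≠ z1 := by
    rw [hz0, hz1]
    intro h
    simpa using congrArg Fin.val h
  set e0 : Q ≃ Fin n := Fintype.equivFin Q with he0
  set e1 : Q ≃ Fin n := e0.trans (Equiv.swap (e0 x₁Q) z0) with he1
  have he1x₁ : e1 x₁Q = z0 := by simp [he1, Equiv.swap_apply_left]
  have he1x₂ : e1 x₂Q ≠ z0 := by
    rw [← he1x₁]
    exact fun h => hQne (e1.injective h).symm
  set e : Q ≃ Fin n := e1.trans (Equiv.swap (e1 x₂Q) z1) with he
  have hex₂ : e x₂Q = z1 := by simp [he, Equiv.swap_apply_left]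
  have hex₁ : e x₁Q = z0 := by
    rw [he]
    simp only [Equiv.trans_apply, he1x₁]
    exact Equiv.swap_apply_of_ne_of_ne (Ne.symm he1x₂) hz01
  have einj0 : ∀ (b : V) (hb : ¬ b = p₁ ∧ ¬ b = p₂ ∧ ¬ b = q₁ ∧ ¬ b = q₂),
      ((e ⟨b, hb⟩).val = 0 ↔ b = x₁) ∧ ((e ⟨b, hb⟩).val = 1 ↔ b = x₂) := by
    intro b hb
    constructor
    · constructor
      · intro h
        have h0 : e ⟨b, hb⟩ = z0 := Fin.ext h
        have h2 := congrArg Subtype.val (e.injective (h0.trans hex₁.symm))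
        rw [hx₁Q] at h2
        exact h2
      · intro h
        have h4 : (⟨b, hb⟩ : Q) = x₁Q := by rw [hx₁Q]; exact Subtype.ext h
        rw [h4, hex₁]
    · constructor
      · intro h
        have h0 : e ⟨b, hb⟩ = z1 := Fin.ext h
        have h2 := congrArg Subtype.val (e.injective (h0.trans hex₂.symm))
        rw [hx₂Q] at h2
        exact h2
      · intro h
        have h4 : (⟨b, hb⟩ : Q) = x₂Q := by rw [hx₂Q]; exact Subtype.ext h
        rw [h4, hex₂]
  have hGp₁ : ∀ b, G.Adj p₁ b ↔ b = x₁ :=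
    fun b => ⟨fun h => hp₁.2 b h, fun h => h ▸ hp₁.1⟩
  have hGp₂ : ∀ b, G.Adj p₂ b ↔ b = x₁ :=
    fun b => ⟨fun h => hp₂.2 b h, fun h => h ▸ hp₂.1⟩
  have hGq₁ : ∀ b, G.Adj q₁ b ↔ b = x₂ :=
    fun b => ⟨fun h => hq₁.2 b h, fun h => h ▸ hq₁.1⟩
  have hGq₂ : ∀ b, G.Adj q₂ b ↔ b = x₂ :=
    fun b => ⟨fun h => hq₂.2 b h, fun h => h ▸ hq₂.1⟩
  set F : V → Fin n ⊕ (Fin 2 ⊕ Fin 2) := fun v =>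
    if h1 : v = p₁ then Sum.inr (Sum.inl 0)
    else if h2 : v = p₂ then Sum.inr (Sum.inl 1)
    else if h3 : v = q₁ then Sum.inr (Sum.inr 0)
    else if h4 : v = q₂ then Sum.inr (Sum.inr 1)
    else Sum.inl (e ⟨v, h1, h2, h3, h4⟩) with hF
  have hFp₁ : F p₁ = Sum.inr (Sum.inl 0) := by rw [hF]; simp
  have hFp₂ : F p₂ = Sum.inr (Sum.inl 1) := by rw [hF]; simp [h12.symm]
  have hFq₁ : F q₁ = Sum.inr (Sum.inr 0) := by rw [hF]; simp [f₁.symm, f₃.symm]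
  have hFq₂ : F q₂ = Sum.inr (Sum.inr 1) := by rw [hF]; simp [f₂.symm, f₄.symm, h34.symm]
  have hFQ : ∀ (v : V) (h1 : ¬ v = p₁) (h2 : ¬ v = p₂) (h3 : ¬ v = q₁) (h4 : ¬ v = q₂),
      F v = Sum.inl (e ⟨v, h1, h2, h3, h4⟩) := by
    intro v h1 h2 h3 h4
    rw [hF]; simp only [dif_neg h1, dif_neg h2, dif_neg h3, dif_neg h4]
  have fin2cases : ∀ i : Fin 2, i = 0 ∨ i = 1 := by
    intro i
    by_cases hi : i = 0
    · exact Or.inl hi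
    · refine Or.inr ?_
      have hlt := i.isLt
      have hv : i.val ≠ 0 := fun h => hi (Fin.ext h)
      apply Fin.ext
      simp only [Fin.val_one]
      omega
  refine ⟨n, hpos2, ⟨?_⟩⟩
  refine ⟨⟨F, fun a => match a with
      | Sum.inl j => (e.symm j : V)
      | Sum.inr (Sum.inl i) => if i = 0 then p₁ else p₂
      | Sum.inr (Sum.inr i) => if i = 0 then q₁ else q₂, ?_, ?_⟩, ?_⟩
  · intro v
    by_cases h1 : v = p₁
    · rw [h1, hFp₁]; simp
    by_cases h2 : v = p₂
    · rw [h2, hFp₂]; norm_num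
    by_cases h3 : v = q₁
    · rw [h3, hFq₁]; simp
    by_cases h4 : v = q₂
    · rw [h4, hFq₂]; norm_num
    · rw [hFQ v h1 h2 h3 h4]
      simp
  · intro a
    match a with
    | Sum.inl j =>
      show F (e.symm j : V) = _
      have hmem := (e.symm j).2
      rw [hFQ _ hmem.1 hmem.2.1 hmem.2.2.1 hmem.2.2.2]
      simp
    | Sum.inr (Sum.inl i) =>
      show F (if i = 0 then p₁ else p₂) = Sum.inr (Sum.inl i)
      rcases fin2cases i with rfl | rfl
      · rw [if_pos rfl, hFp₁]
      · rw [if_neg (by norm_num), hFp₂]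
    | Sum.inr (Sum.inr i) =>
      show F (if i = 0 then q₁ else q₂) = Sum.inr (Sum.inr i)
      rcases fin2cases i with rfl | rfl
      · rw [if_pos rfl, hFq₁]
      · rw [if_neg (by norm_num), hFq₂]
  · intro a b
    simp only [Equiv.coe_fn_mk]
    by_cases ha1 : a = p₁
    · rw [ha1, hFp₁]
      by_cases hb1 : b = p₁
      · rw [hb1, hFp₁]; exact iff_of_false (gdp_adj_PP n _ _) G.irrefl
      by_cases hb2 : b = p₂
      · rw [hb2, hFp₂]
        exact iff_of_false (gdp_adj_PP n _ _) (fun h => (Ne.symm e₂) ((hGp₁ p₂).mp h))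
      by_cases hb3 : b = q₁
      · rw [hb3, hFq₁]
        exact iff_of_false (gdp_adj_PP n _ _) (fun h => (Ne.symm e₅) ((hGp₁ q₁).mp h))
      by_cases hb4 : b = q₂
      · rw [hb4, hFq₂]
        exact iff_of_false (gdp_adj_PP n _ _) (fun h => (Ne.symm e₆) ((hGp₁ q₂).mp h))
      · rw [hFQ b hb1 hb2 hb3 hb4, gdp_adj_PQ, hGp₁, (einj0 b ⟨hb1, hb2, hb3, hb4⟩).1]
    by_cases ha2 : a = p₂
    · rw [ha2, hFp₂]
      by_cases hb1 : b = p₁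
      · rw [hb1, hFp₁]
        exact iff_of_false (gdp_adj_PP n _ _) (fun h => (Ne.symm e₁) ((hGp₂ p₁).mp h))
      by_cases hb2 : b = p₂
      · rw [hb2, hFp₂]; exact iff_of_false (gdp_adj_PP n _ _) G.irrefl
      by_cases hb3 : b = q₁
      · rw [hb3, hFq₁]
        exact iff_of_false (gdp_adj_PP n _ _) (fun h => (Ne.symm e₅) ((hGp₂ q₁).mp h))
      by_cases hb4 : b = q₂
      · rw [hb4, hFq₂]
        exact iff_of_false (gdp_adj_PP n _ _) (fun h => (Ne.symm e₆) ((hGp₂ q₂).mp h))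
      · rw [hFQ b hb1 hb2 hb3 hb4, gdp_adj_PQ, hGp₂, (einj0 b ⟨hb1, hb2, hb3, hb4⟩).1]
    by_cases ha3 : a = q₁
    · rw [ha3, hFq₁]
      by_cases hb1 : b = p₁
      · rw [hb1, hFp₁]
        exact iff_of_false (gdp_adj_PP n _ _) (fun h => (Ne.symm e₇) ((hGq₁ p₁).mp h))
      by_cases hb2 : b = p₂
      · rw [hb2, hFp₂]
        exact iff_of_false (gdp_adj_PP n _ _) (fun h => (Ne.symm e₈) ((hGq₁ p₂).mp h))
      by_cases hb3 : b = q₁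
      · rw [hb3, hFq₁]; exact iff_of_false (gdp_adj_PP n _ _) G.irrefl
      by_cases hb4 : b = q₂
      · rw [hb4, hFq₂]
        exact iff_of_false (gdp_adj_PP n _ _) (fun h => (Ne.symm e₄) ((hGq₁ q₂).mp h))
      · rw [hFQ b hb1 hb2 hb3 hb4, gdp_adj_RQ, hGq₁, (einj0 b ⟨hb1, hb2, hb3, hb4⟩).2]
    by_cases ha4 : a = q₂
    · rw [ha4, hFq₂]
      by_cases hb1 : b = p₁
      · rw [hb1, hFp₁]
        exact iff_of_false (gdp_adj_PP n _ _) (fun h => (Ne.symm e₇) ((hGq₂ p₁).mp h))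
      by_cases hb2 : b = p₂
      · rw [hb2, hFp₂]
        exact iff_of_false (gdp_adj_PP n _ _) (fun h => (Ne.symm e₈) ((hGq₂ p₂).mp h))
      by_cases hb3 : b = q₁
      · rw [hb3, hFq₁]
        exact iff_of_false (gdp_adj_PP n _ _) (fun h => (Ne.symm e₃) ((hGq₂ q₁).mp h))
      by_cases hb4 : b = q₂
      · rw [hb4, hFq₂]; exact iff_of_false (gdp_adj_PP n _ _) G.irrefl
      · rw [hFQ b hb1 hb2 hb3 hb4, gdp_adj_RQ, hGq₂, (einj0 b ⟨hb1, hb2, hb3, hb4⟩).2]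
    · rw [hFQ a ha1 ha2 ha3 ha4]
      by_cases hb1 : b = p₁
      · rw [hb1, hFp₁, gdp_adj_QP, (einj0 a ⟨ha1, ha2, ha3, ha4⟩).1, G.adj_comm, hGp₁]
      by_cases hb2 : b = p₂
      · rw [hb2, hFp₂, gdp_adj_QP, (einj0 a ⟨ha1, ha2, ha3, ha4⟩).1, G.adj_comm, hGp₂]
      by_cases hb3 : b = q₁
      · rw [hb3, hFq₁, gdp_adj_QR, (einj0 a ⟨ha1, ha2, ha3, ha4⟩).2, G.adj_comm, hGq₁]
      by_cases hb4 : b = q₂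
      · rw [hb4, hFq₂, gdp_adj_QR, (einj0 a ⟨ha1, ha2, ha3, ha4⟩).2, G.adj_comm, hGq₂]
      · rw [hFQ b hb1 hb2 hb3 hb4, gdp_adj_QQ]
        constructor
        · intro h
          refine hcl a b ha1 ha2 ha3 ha4 hb1 hb2 hb3 hb4 ?_
          rintro rfl
          exact h rfl
        · intro h hcon
          exact G.ne_of_adj h (congrArg Subtype.val (e.injective hcon))

lemma iso_to_sa {V : Type*} {G : SimpleGraph V} {n : ℕ} (hn : 1 ≤ n)
    (φ : G ≃g GnPrimeUnionK1 n) : SA G := by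
  set z : V := φ.symm (Sum.inr ()) with hzd
  set p₁ : V := φ.symm (Sum.inl (Sum.inr 0)) with hp₁d
  set p₂ : V := φ.symm (Sum.inl (Sum.inr 1)) with hp₂d
  set x : V := φ.symm (Sum.inl (Sum.inl ⟨0, hn⟩)) with hxd
  have hφz : φ z = Sum.inr () := by rw [hzd]; exact φ.apply_symm_apply _
  have hφp₁ : φ p₁ = Sum.inl (Sum.inr 0) := by rw [hp₁d]; exact φ.apply_symm_apply _
  have hφp₂ : φ p₂ = Sum.inl (Sum.inr 1) := by rw [hp₂d]; exact φ.apply_symm_apply _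
  have hφx : φ x = Sum.inl (Sum.inl ⟨0, hn⟩) := by rw [hxd]; exact φ.apply_symm_apply _
  have hmap : ∀ u v : V, G.Adj u v ↔ (GnPrimeUnionK1 n).Adj (φ u) (φ v) :=
    fun u v => (φ.map_rel_iff).symm
  have hinj : ∀ u v : V, φ u = φ v → u = v := fun u v h => φ.toEquiv.injective h
  refine ⟨z, x, p₁, p₂, ?_, ⟨?_, ?_⟩, ⟨?_, ?_⟩, ?_, ?_⟩
  · intro u h
    rw [hmap, hφz] at h
    exact (gnp_adj_z n (φ u) ()).2 h
  · rw [hmap, hφp₁, hφx]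
    rw [gnp_adj_PQ]
  · intro u h
    rw [hmap, hφp₁] at h
    rcases hu : φ u with (i | j) | un
    · rw [hu] at h
      rw [gnp_adj_PQ] at h
      apply hinj
      rw [hu, hφx]
      congr 2
      exact Fin.ext h
    · rw [hu] at h
      exact absurd h (gnp_adj_PP n 0 j)
    · rw [hu] at h
      exact absurd h (gnp_adj_z n _ un).1
  · rw [hmap, hφp₂, hφx]
    rw [gnp_adj_PQ]
  · intro u h
    rw [hmap, hφp₂] at h
    rcases hu : φ u with (i | j) | un
    · rw [hu] at h
      rw [gnp_adj_PQ] at h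
      apply hinj
      rw [hu, hφx]
      congr 2
      exact Fin.ext h
    · rw [hu] at h
      exact absurd h (gnp_adj_PP n 1 j)
    · rw [hu] at h
      exact absurd h (gnp_adj_z n _ un).1
  · intro h
    have : φ p₁ = φ p₂ := congrArg φ h
    rw [hφp₁, hφp₂] at this
    simp at this
  · intro u v huz hup₁ hup₂ hvz hvp₁ hvp₂ huv
    have categ : ∀ t : V, t ≠ z → t ≠ p₁ → t ≠ p₂ → ∃ i : Fin n, φ t = Sum.inl (Sum.inl i) := by
      intro t htz htp₁ htp₂
      rcases ht : φ t with (i | j) | un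
      · exact ⟨i, rfl⟩
      · exfalso
        have hj : j = 0 ∨ j = 1 := by
          by_cases hj0 : j = 0
          · exact Or.inl hj0
          · right
            have hlt := j.isLt
            have hv : j.val ≠ 0 := fun h => hj0 (Fin.ext h)
            apply Fin.ext
            simp only [Fin.val_one]
            omega
        rcases hj with rfl | rfl
        · exact htp₁ (hinj t p₁ (ht.trans hφp₁.symm))
        · exact htp₂ (hinj t p₂ (ht.trans hφp₂.symm))
      · exfalso
        apply htz
        apply hinj
        rw [ht, hφz]
    obtain ⟨i, hi⟩ := categ u huz hup₁ hup₂
    obtain ⟨i', hi'⟩ := categ v hvz hvp₁ hvp₂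
    rw [hmap, hi, hi', gnp_adj_QQ]
    intro hcon
    apply huv
    apply hinj
    rw [hi, hi', hcon]

lemma fin2_cases' (j : Fin 2) : j = 0 ∨ j = 1 := by
  by_cases hj0 : j = 0
  · exact Or.inl hj0
  · right
    have hlt := j.isLt
    have hv : j.val ≠ 0 := fun h => hj0 (Fin.ext h)
    apply Fin.ext
    simp only [Fin.val_one]
    omega

lemma iso_to_sb {V : Type*} {G : SimpleGraph V} {n : ℕ} (hn : 2 ≤ n)
    (φ : G ≃g GnDoublePrime n) : SB G := by
  set x₁ : V := φ.symm (Sum.inl ⟨0, by omega⟩) with hx₁d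
  set x₂ : V := φ.symm (Sum.inl ⟨1, by omega⟩) with hx₂d
  set p₁ : V := φ.symm (Sum.inr (Sum.inl 0)) with hp₁d
  set p₂ : V := φ.symm (Sum.inr (Sum.inl 1)) with hp₂d
  set q₁ : V := φ.symm (Sum.inr (Sum.inr 0)) with hq₁d
  set q₂ : V := φ.symm (Sum.inr (Sum.inr 1)) with hq₂d
  have hφx₁ : φ x₁ = Sum.inl ⟨0, by omega⟩ := by rw [hx₁d]; exact φ.apply_symm_apply _
  have hφx₂ : φ x₂ = Sum.inl ⟨1, by omega⟩ := by rw [hx₂d]; exact φ.apply_symm_apply _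
  have hφp₁ : φ p₁ = Sum.inr (Sum.inl 0) := by rw [hp₁d]; exact φ.apply_symm_apply _
  have hφp₂ : φ p₂ = Sum.inr (Sum.inl 1) := by rw [hp₂d]; exact φ.apply_symm_apply _
  have hφq₁ : φ q₁ = Sum.inr (Sum.inr 0) := by rw [hq₁d]; exact φ.apply_symm_apply _
  have hφq₂ : φ q₂ = Sum.inr (Sum.inr 1) := by rw [hq₂d]; exact φ.apply_symm_apply _
  have hmap : ∀ u v : V, G.Adj u v ↔ (GnDoublePrime n).Adj (φ u) (φ v) :=
    fun u v => (φ.map_rel_iff).symm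
  have hinj : ∀ u v : V, φ u = φ v → u = v := fun u v h => φ.toEquiv.injective h
  refine ⟨x₁, x₂, p₁, p₂, q₁, q₂, ?_, ?_, ?_, ⟨?_, ?_⟩, ⟨?_, ?_⟩, ⟨?_, ?_⟩, ⟨?_, ?_⟩, ?_⟩
  · intro h
    have := congrArg φ h
    rw [hφx₁, hφx₂] at this
    simp only [Sum.inl.injEq] at this
    exact absurd (congrArg Fin.val this) (by norm_num)
  · intro h
    have := congrArg φ h
    rw [hφp₁, hφp₂] at this
    simp at this
  · intro h
    have := congrArg φ h
    rw [hφq₁, hφq₂] at this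
    simp at this
  · rw [hmap, hφp₁, hφx₁, gdp_adj_PQ]
  · intro u h
    rw [hmap, hφp₁] at h
    rcases hu : φ u with i | (j | j)
    · rw [hu, gdp_adj_PQ] at h
      apply hinj
      rw [hu, hφx₁]
      congr 1
      exact Fin.ext h
    · rw [hu] at h; exact absurd h (gdp_adj_PP n _ _)
    · rw [hu] at h; exact absurd h (gdp_adj_PP n _ _)
  · rw [hmap, hφp₂, hφx₁, gdp_adj_PQ]
  · intro u h
    rw [hmap, hφp₂] at h
    rcases hu : φ u with i | (j | j)
    · rw [hu, gdp_adj_PQ] at h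
      apply hinj
      rw [hu, hφx₁]
      congr 1
      exact Fin.ext h
    · rw [hu] at h; exact absurd h (gdp_adj_PP n _ _)
    · rw [hu] at h; exact absurd h (gdp_adj_PP n _ _)
  · rw [hmap, hφq₁, hφx₂, gdp_adj_RQ]
  · intro u h
    rw [hmap, hφq₁] at h
    rcases hu : φ u with i | (j | j)
    · rw [hu, gdp_adj_RQ] at h
      apply hinj
      rw [hu, hφx₂]
      congr 1
      exact Fin.ext h
    · rw [hu] at h; exact absurd h (gdp_adj_PP n _ _)
    · rw [hu] at h; exact absurd h (gdp_adj_PP n _ _)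
  · rw [hmap, hφq₂, hφx₂, gdp_adj_RQ]
  · intro u h
    rw [hmap, hφq₂] at h
    rcases hu : φ u with i | (j | j)
    · rw [hu, gdp_adj_RQ] at h
      apply hinj
      rw [hu, hφx₂]
      congr 1
      exact Fin.ext h
    · rw [hu] at h; exact absurd h (gdp_adj_PP n _ _)
    · rw [hu] at h; exact absurd h (gdp_adj_PP n _ _)
  · intro u v hu₁ hu₂ hu₃ hu₄ hv₁ hv₂ hv₃ hv₄ huv
    have categ : ∀ t : V, t ≠ p₁ → t ≠ p₂ → t ≠ q₁ → t ≠ q₂ →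
        ∃ i : Fin n, φ t = Sum.inl i := by
      intro t h₁ h₂ h₃ h₄
      rcases ht : φ t with i | (j | j)
      · exact ⟨i, rfl⟩
      · exfalso
        rcases fin2_cases' j with rfl | rfl
        · exact h₁ (hinj t p₁ (ht.trans hφp₁.symm))
        · exact h₂ (hinj t p₂ (ht.trans hφp₂.symm))
      · exfalso
        rcases fin2_cases' j with rfl | rfl
        · exact h₃ (hinj t q₁ (ht.trans hφq₁.symm))
        · exact h₄ (hinj t q₂ (ht.trans hφq₂.symm))
    obtain ⟨i, hi⟩ := categ u hu₁ hu₂ hu₃ hu₄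
    obtain ⟨i', hi'⟩ := categ v hv₁ hv₂ hv₃ hv₄
    rw [hmap, hi, hi', gdp_adj_QQ]
    intro hcon
    apply huv
    apply hinj
    rw [hi, hi', hcon]

end MBDAux

/-- A (finite) graph `G` is `2`-`γ_SMB`-critical if and only if `G` is isomorphic to
`G_n' ∪ K₁` for some `n ≥ 1`, or to `G_n''` for some `n ≥ 2`. -/
theorem two_gammaSMB_critical_iff {V : Type*} [Fintype V] (G : SimpleGraph V) :
    (gammaSMB G = 2 ∧ ∀ u v : V, u ≠ v → ¬ G.Adj u v →
        gammaSMB G < gammaSMB (G ⊔ SimpleGraph.fromEdgeSet {s(u, v)})) ↔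
      ((∃ n : ℕ, 1 ≤ n ∧ Nonempty (G ≃g GnPrimeUnionK1 n)) ∨
        (∃ n : ℕ, 2 ≤ n ∧ Nonempty (G ≃g GnDoublePrime n))) := by
  constructor
  · rintro ⟨h2, hcrit⟩
    have hg := (MBDAux.gammaSMB_eq_two_iff G).mp h2
    have hGood : MBDAux.Good G := by
      refine ⟨hg.1.1, hg.1.2, ?_, ?_⟩
      · intro z₁ z₂ hz₁ hz₂
        by_contra hne
        exact hg.2 ⟨z₁, z₂, hne, hz₁, hz₂⟩
      · intro u v huv hnadj hall
        have hlt := hcrit u v huv hnadj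
        rw [h2] at hlt
        rw [MBDAux.gammaSMB_two_lt_iff] at hlt
        exact hlt ⟨hg.1.1, hall⟩
    rcases MBDAux.good_to_struct hGood with hSA | hSB
    · obtain ⟨z, x, p₁, p₂, hz, hp₁, hp₂, h12, hcl⟩ := hSA
      exact Or.inl (MBDAux.sa_iso hz hp₁ hp₂ h12 hcl)
    · obtain ⟨x₁, x₂, p₁, p₂, q₁, q₂, hx, h12, h34, hp₁, hp₂, hq₁, hq₂, hcl⟩ := hSB
      exact Or.inr (MBDAux.sb_iso hx h12 h34 hp₁ hp₂ hq₁ hq₂ hcl)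
  · intro h
    have hGood : MBDAux.Good G := by
      rcases h with ⟨n, hn, ⟨φ⟩⟩ | ⟨n, hn, ⟨φ⟩⟩
      · obtain ⟨z, x, p₁, p₂, hz, hp₁, hp₂, h12, hcl⟩ := MBDAux.iso_to_sa hn φ
        exact MBDAux.sa_good hz hp₁ hp₂ h12 hcl
      · obtain ⟨x₁, x₂, p₁, p₂, q₁, q₂, hx, h12, h34, hp₁, hp₂, hq₁, hq₂, hcl⟩ :=
          MBDAux.iso_to_sb hn φ
        exact MBDAux.sb_good hx h12 h34 hp₁ hp₂ hq₁ hq₂ hcl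
    obtain ⟨hne, hcw, huniq, hcritG⟩ := hGood
    have h2 : gammaSMB G = 2 := by
      rw [MBDAux.gammaSMB_eq_two_iff]
      exact ⟨⟨hne, hcw⟩, fun ⟨z₁, z₂, hzne, h₁, h₂⟩ => hzne (huniq z₁ z₂ h₁ h₂)⟩
    refine ⟨h2, fun u v huv hnadj => ?_⟩
    rw [h2, MBDAux.gammaSMB_two_lt_iff]
    rintro ⟨-, hall⟩
    exact hcritG u v huv hnadj hall
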